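/- Let R = ⊕_{p≥0} R_p be a commutative ℕ-graded ring and let y₁,…,yₙ ∈ R be elements of the form yᵢ = xᵢ + (element of F^{kᵢ−1}R), where xᵢ ∈ R_{kᵢ} is homogeneous of degree kᵢ and F^aR := ⊕_{p≤a} R_p. If x₁,…,xₙ is an R-regular sequence in every order, then y₁,…,yₙ is an R-regular sequence in every order. -/

import Mathlib

/-!
Each order is treated separately. Suppose `y i * z ∈ (y j)_{j < i}`, say
`y i * z = ∑ a j * y j`. The top-degree parts of the `a j` form a syzygy of the `x j`; as the
`x j` form a regular sequence this syzygy is Koszul, and subtracting the matching Koszul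
combination of the `y j` lowers the degrees of the `a j` until `deg a j ≤ deg z + k i - k j`.
Comparing top-degree parts then gives `x i * z_top ∈ (x j)_{j < i}`, hence
`z_top = ∑ v j * x j` with `v j` homogeneous, and `z - ∑ v j * y j` has smaller degree, so
induction on the degree of `z` concludes.
-/

/-- A sequence (given as a list) `a₁, …, aₙ` in a commutative ring `A` is `A`-regular if for
each `i`, `aᵢ` is not a zero divisor on `A ⧸ (a₁, …, a_{i-1})`. -/
def IsRegularSeq {A : Type*} [CommRing A] (l : List A) : Prop :=
  ∀ (i : ℕ) (h : i < l.length), ∀ x : A,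
    l.get ⟨i, h⟩ * x ∈ Ideal.span {y | y ∈ l.take i} →
      x ∈ Ideal.span {y | y ∈ l.take i}

/-- `Fmem 𝒜 a r` says that `r ∈ F^aR = ⊕_{p ≤ a} R_p`: all homogeneous components of `r`
of degree `> a` vanish. -/
def Fmem {R : Type*} [CommRing R] (𝒜 : ℕ → AddSubgroup R) [GradedRing 𝒜] (a : ℤ)
    (r : R) : Prop :=
  ∀ p : ℕ, a < (p : ℤ) → (DirectSum.decompose 𝒜 r p : R) = 0

theorem Ideal.mem_span_image_finset_iff {R ι : Type*} [CommRing R] {f : ι → R} {s : Finset ι}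
    {r : R} : r ∈ Ideal.span (f '' s) ↔ ∃ u : ι → R, ∑ j ∈ s, u j * f j = r := by
  classical
  rw [Ideal.span, Fintype.mem_span_image_iff_exists_fun]
  constructor
  · rintro ⟨c, rfl⟩
    refine ⟨fun j => if h : j ∈ s then c ⟨j, h⟩ else 0, ?_⟩
    rw [← Finset.sum_coe_sort s]
    simp
  · rintro ⟨u, rfl⟩
    exact ⟨fun j => u j, Finset.sum_coe_sort s fun j => u j * f j⟩

theorem Finset.sum_sum_sub_swap_mul_mul_eq_zero {R ι : Type*} [CommRing R] (s : Finset ι)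
    (B : ι → ι → R) (f : ι → R) :
    ∑ j ∈ s, (∑ l ∈ s, (B j l - B l j) * f l) * f j = 0 := by
  simp only [Finset.sum_mul, sub_mul, Finset.sum_sub_distrib]
  rw [Finset.sum_comm (f := fun j l => B l j * f l * f j), sub_eq_zero]
  exact Finset.sum_congr rfl fun _ _ => Finset.sum_congr rfl fun _ _ => by ring

def IsRegularOn {R ι : Type*} [CommRing R] [LinearOrder ι] (x : ι → R) (s : Finset ι) : Prop :=
  ∀ i ∈ s, ∀ c, x i * c ∈ Ideal.span (x '' ↑{j ∈ s | j < i}) →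
    c ∈ Ideal.span (x '' ↑{j ∈ s | j < i})

theorem IsRegularOn.filter_lt {R ι : Type*} [CommRing R] [LinearOrder ι] {x : ι → R}
    {s : Finset ι} (h : IsRegularOn x s) (i : ι) : IsRegularOn x {j ∈ s | j < i} := by
  intro i' hi' c
  rw [Finset.mem_filter] at hi'
  have : {j ∈ {j ∈ s | j < i} | j < i'} = {j ∈ s | j < i'} := by
    ext j
    simp only [Finset.mem_filter]
    constructor
    · exact fun h => ⟨h.1.1, h.2⟩
    · exact fun h => ⟨⟨h.1, h.2.trans hi'.2⟩, h.2⟩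
  rw [this]
  exact h i' hi'.1 c

/- Writing the Koszul coefficients as `B j l - B l j` makes them alternating, including the
vanishing diagonal, which antisymmetry alone does not give in characteristic `2`. -/
theorem exists_koszul_coeffs_of_sum_mul_eq_zero {R ι : Type*} [CommRing R] [LinearOrder ι]
    {x : ι → R} {s : Finset ι} (hreg : IsRegularOn x s) {c : ι → R} (hc : ∑ j ∈ s, c j * x j = 0) :
    ∃ B : ι → ι → R, ∀ j ∈ s, c j = ∑ l ∈ s, (B j l - B l j) * x l := by
  classical
  induction s using Finset.induction_on_max generalizing c with
  | empty => exact ⟨0, by simp⟩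
  | insert a s has ih =>
    have ha : a ∉ s := fun h => lt_irrefl a (has a h)
    have hfilter : ∀ i ∈ s, (insert a s).filter (· < i) = s.filter (· < i) := fun i hi => by
      rw [Finset.filter_insert, if_neg (has i hi).not_gt]
    rw [Finset.sum_insert ha] at hc
    have hca : c a ∈ Ideal.span (x '' ↑s) := by
      have := hreg a (Finset.mem_insert_self a s) (c a)
      rw [Finset.filter_insert, if_neg (lt_irrefl a), Finset.filter_true_of_mem has] at this
      refine this ?_
      rw [mul_comm, eq_neg_of_add_eq_zero_left hc]
      exact neg_mem (Ideal.mem_span_image_finset_iff.mpr ⟨c, rfl⟩)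
    obtain ⟨u, hu⟩ := Ideal.mem_span_image_finset_iff.mp hca
    obtain ⟨B₀, hB₀⟩ := ih (fun i hi => hfilter i hi ▸ hreg i (Finset.mem_insert_of_mem hi))
      (c := fun j => c j + u j * x a) (by
        simp only [add_mul, Finset.sum_add_distrib, mul_right_comm _ (x a), ← Finset.sum_mul, hu]
        linear_combination hc)
    refine ⟨fun j l => if l = a then 0 else if j = a then u l else B₀ j l, fun j hj => ?_⟩
    have hne : ∀ l ∈ s, l ≠ a := fun l hl => (has l hl).ne
    rw [Finset.sum_insert ha]
    rcases Finset.mem_insert.mp hj with rfl | hj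
    · simp +contextual [hne, ← hu]
    · simp only [if_neg (hne j hj), ↓reduceIte]
      rw [Finset.sum_congr rfl fun l hl => by rw [if_neg (hne l hl), if_neg (hne l hl)]]
      linear_combination hB₀ j hj

namespace GradedRing

/- Degrees are taken in `ℤ` so that shifts such as `D - k` need no truncated subtraction;
`intGrade 𝒜 q` and `intProj 𝒜 q` vanish for `q < 0`, and `degLE 𝒜 a` is `F^a R`. -/
def intGrade {R : Type*} [CommRing R] (𝒜 : ℕ → AddSubgroup R) (q : ℤ) : AddSubgroup R :=
  if 0 ≤ q then 𝒜 q.toNat else ⊥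

@[simp]
theorem mem_intGrade_natCast {R : Type*} [CommRing R] {𝒜 : ℕ → AddSubgroup R} {p : ℕ} {r : R} :
    r ∈ intGrade 𝒜 p ↔ r ∈ 𝒜 p := by
  simp [intGrade]

variable {R : Type*} [CommRing R] (𝒜 : ℕ → AddSubgroup R) [GradedRing 𝒜]

noncomputable def intProj (q : ℤ) : R →+ R := if 0 ≤ q then proj 𝒜 q.toNat else 0

def degLE (a : ℤ) : AddSubgroup R where
  carrier := {r | ∀ q, a < q → intProj 𝒜 q r = 0}
  zero_mem' _ _ := map_zero _
  add_mem' hr hs q hq := by rw [map_add, hr q hq, hs q hq, add_zero]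
  neg_mem' hr q hq := by rw [map_neg, hr q hq, neg_zero]

variable {𝒜}

theorem intProj_natCast (p : ℕ) (r : R) : intProj 𝒜 p r = DirectSum.decompose 𝒜 r p := by
  simp [intProj]

theorem intProj_mem (q : ℤ) (r : R) : intProj 𝒜 q r ∈ intGrade 𝒜 q := by
  unfold intProj intGrade
  split_ifs
  · exact SetLike.coe_mem _
  · rfl

theorem intProj_of_mem {q : ℤ} {r : R} (h : r ∈ intGrade 𝒜 q) : intProj 𝒜 q r = r := by
  unfold intProj intGrade at *
  split_ifs at h ⊢
  · exact DirectSum.decompose_of_mem_same 𝒜 h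
  · exact (AddSubgroup.mem_bot.mp h).symm

theorem intProj_of_mem_of_ne {p q : ℤ} {r : R} (h : r ∈ intGrade 𝒜 p) (hne : q ≠ p) :
    intProj 𝒜 q r = 0 := by
  unfold intProj intGrade at *
  split_ifs at h ⊢
  · exact DirectSum.decompose_of_mem_ne 𝒜 h (by omega)
  · rw [AddSubgroup.mem_bot.mp h, map_zero]
  all_goals rfl

theorem mul_mem_intGrade {p q : ℤ} {r s : R} (hr : r ∈ intGrade 𝒜 p) (hs : s ∈ intGrade 𝒜 q) :
    r * s ∈ intGrade 𝒜 (p + q) := by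
  rcases lt_or_ge p 0 with hp | hp
  · simp only [intGrade, if_neg hp.not_ge, AddSubgroup.mem_bot] at hr
    simp [hr]
  rcases lt_or_ge q 0 with hq | hq
  · simp only [intGrade, if_neg hq.not_ge, AddSubgroup.mem_bot] at hs
    simp [hs]
  lift p to ℕ using hp
  lift q to ℕ using hq
  rw [← Nat.cast_add, mem_intGrade_natCast] at *
  exact SetLike.mul_mem_graded hr hs

theorem intProj_mul_of_mem {k : ℕ} {x : R} (hx : x ∈ 𝒜 k) (q : ℤ) (r : R) :
    intProj 𝒜 q (x * r) = x * intProj 𝒜 (q - k) r := by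
  induction r using DirectSum.Decomposition.inductionOn 𝒜 with
  | zero => simp
  | @homogeneous p m =>
    have hm : (m : R) ∈ intGrade 𝒜 p := mem_intGrade_natCast.mpr m.2
    have hxm := mul_mem_intGrade (mem_intGrade_natCast.mpr hx) hm
    rcases eq_or_ne q (k + p) with rfl | hne
    · rw [intProj_of_mem hxm, add_sub_cancel_left, intProj_of_mem hm]
    · rw [intProj_of_mem_of_ne hxm hne, intProj_of_mem_of_ne hm (by omega), mul_zero]
  | add r s hr hs => rw [mul_add, map_add, hr, hs, map_add, mul_add]

theorem mem_degLE_iff_fmem {a : ℤ} {r : R} : r ∈ degLE 𝒜 a ↔ Fmem 𝒜 a r := by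
  refine ⟨fun h p hp => intProj_natCast (𝒜 := 𝒜) p r ▸ h p hp, fun h q hq => ?_⟩
  rcases le_or_gt 0 q with hq0 | hq0
  · lift q to ℕ using hq0
    rw [intProj_natCast]
    exact h q hq
  · simp [intProj, not_le.mpr hq0]

theorem degLE_mono : Monotone (degLE 𝒜) :=
  fun _ _ hab _ hr q hq => hr q (lt_of_le_of_lt hab hq)

theorem intGrade_le_degLE (q : ℤ) : intGrade 𝒜 q ≤ degLE 𝒜 q :=
  fun _ hr _ hq' => intProj_of_mem_of_ne hr hq'.ne'

theorem mul_mem_degLE {a b : ℤ} {r s : R} (hr : r ∈ degLE 𝒜 a) (hs : s ∈ degLE 𝒜 b) :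
    r * s ∈ degLE 𝒜 (a + b) := by
  classical
  rw [← DirectSum.sum_support_decompose 𝒜 r, ← DirectSum.sum_support_decompose 𝒜 s,
    Finset.sum_mul_sum]
  refine sum_mem fun p _ => sum_mem fun q _ => ?_
  by_cases hp : a < p
  · rw [← intProj_natCast, hr p hp, zero_mul]
    exact zero_mem _
  by_cases hq : b < q
  · rw [← intProj_natCast q, hs q hq, mul_zero]
    exact zero_mem _
  refine degLE_mono (show (p + q : ℤ) ≤ a + b by omega)
    (intGrade_le_degLE _ (mul_mem_intGrade ?_ ?_)) <;>
    exact mem_intGrade_natCast.mpr (SetLike.coe_mem _)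

theorem eventually_mem_degLE (r : R) : ∀ᶠ a in Filter.atTop, r ∈ degLE 𝒜 a := by
  induction r using DirectSum.Decomposition.inductionOn 𝒜 with
  | zero => exact .of_forall fun _ => zero_mem _
  | @homogeneous p m =>
    exact Filter.eventually_atTop.2
      ⟨p, fun a ha => degLE_mono ha (intGrade_le_degLE _ (mem_intGrade_natCast.mpr m.2))⟩
  | add r s hr hs => exact (hr.and hs).mono fun _ h => add_mem h.1 h.2

theorem eq_zero_of_mem_degLE {a : ℤ} (ha : a < 0) {r : R} (hr : r ∈ degLE 𝒜 a) : r = 0 := by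
  classical
  rw [← DirectSum.sum_support_decompose 𝒜 r]
  exact Finset.sum_eq_zero fun p _ => intProj_natCast (𝒜 := 𝒜) p r ▸ hr p (by omega)

theorem sub_mem_degLE_sub_one {a : ℤ} {r s : R} (hr : r ∈ degLE 𝒜 a) (hs : s ∈ degLE 𝒜 a)
    (h : intProj 𝒜 a r = intProj 𝒜 a s) : r - s ∈ degLE 𝒜 (a - 1) := by
  intro q hq
  rw [map_sub, sub_eq_zero]
  rcases eq_or_lt_of_le (show a ≤ q by omega) with rfl | hlt
  · exact h
  · rw [hr q hlt, hs q hlt]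

theorem mem_degLE_of_sub_mem {k : ℕ} {x y : R} (hx : x ∈ 𝒜 k)
    (hxy : y - x ∈ degLE 𝒜 (k - 1)) : y ∈ degLE 𝒜 k := by
  rw [← sub_add_cancel y x]
  exact add_mem (degLE_mono (by omega) hxy) (intGrade_le_degLE _ (mem_intGrade_natCast.mpr hx))

theorem intProj_mul_of_sub_mem {k : ℕ} {x y : R} (hx : x ∈ 𝒜 k)
    (hxy : y - x ∈ degLE 𝒜 (k - 1)) {D : ℤ} {a : R} (ha : a ∈ degLE 𝒜 (D - k)) :
    intProj 𝒜 D (a * y) = x * intProj 𝒜 (D - k) a := by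
  have hlow : a * (y - x) ∈ degLE 𝒜 (D - 1) := degLE_mono (by omega) (mul_mem_degLE ha hxy)
  rw [show a * y = x * a + a * (y - x) by ring, map_add, intProj_mul_of_mem hx,
    hlow D (by omega), add_zero]

variable {ι : Type*}

theorem intProj_sum_mul {x : ι → R} {k : ι → ℕ} (hx : ∀ i, x i ∈ 𝒜 (k i)) (q : ℤ)
    (t : Finset ι) (u : ι → R) :
    intProj 𝒜 q (∑ l ∈ t, u l * x l) = ∑ l ∈ t, intProj 𝒜 (q - k l) (u l) * x l := by
  rw [map_sum]
  exact Finset.sum_congr rfl fun l _ => by rw [mul_comm, intProj_mul_of_mem (hx l), mul_comm]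

theorem exists_homogeneous_koszul_coeffs [LinearOrder ι] {x : ι → R} {k : ι → ℕ}
    (hx : ∀ i, x i ∈ 𝒜 (k i)) {s : Finset ι} (hreg : IsRegularOn x s) {D : ℤ} {c : ι → R}
    (hc : ∀ j, c j ∈ intGrade 𝒜 (D - k j)) (hsum : ∑ j ∈ s, c j * x j = 0) :
    ∃ B : ι → ι → R, (∀ j l, B j l ∈ intGrade 𝒜 (D - k j - k l)) ∧
      ∀ j ∈ s, c j = ∑ l ∈ s, (B j l - B l j) * x l := by
  obtain ⟨B, hB⟩ := exists_koszul_coeffs_of_sum_mul_eq_zero hreg hsum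
  refine ⟨fun j l => intProj 𝒜 (D - k j - k l) (B j l), fun j l => intProj_mem _ _,
    fun j hj => ?_⟩
  rw [← intProj_of_mem (hc j), hB j hj, intProj_sum_mul hx]
  simp only [map_sub, sub_right_comm (D : ℤ) (k j : ℤ)]

variable {x y : ι → R} {k : ι → ℕ}

theorem sum_mul_mem_degLE (hx : ∀ i, x i ∈ 𝒜 (k i))
    (hxy : ∀ i, y i - x i ∈ degLE 𝒜 (k i - 1)) {t : Finset ι} {D : ℤ} {a : ι → R}
    (ha : ∀ j ∈ t, a j ∈ degLE 𝒜 (D - k j)) : ∑ j ∈ t, a j * y j ∈ degLE 𝒜 D :=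
  sum_mem fun j hj => by
    simpa using mul_mem_degLE (ha j hj) (mem_degLE_of_sub_mem (hx j) (hxy j))

theorem intProj_sum_mul_of_sub_mem (hx : ∀ i, x i ∈ 𝒜 (k i))
    (hxy : ∀ i, y i - x i ∈ degLE 𝒜 (k i - 1)) {t : Finset ι} {D : ℤ} {a : ι → R}
    (ha : ∀ j ∈ t, a j ∈ degLE 𝒜 (D - k j)) :
    intProj 𝒜 D (∑ j ∈ t, a j * y j) = ∑ j ∈ t, intProj 𝒜 (D - k j) (a j) * x j := by
  rw [map_sum]
  exact Finset.sum_congr rfl fun j hj => by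
    rw [intProj_mul_of_sub_mem (hx j) (hxy j) (ha j hj), mul_comm]

theorem exists_sub_mem_degLE_sub_one (hx : ∀ i, x i ∈ 𝒜 (k i))
    (hxy : ∀ i, y i - x i ∈ degLE 𝒜 (k i - 1)) {t : Finset ι} {e : ℤ} {z : R}
    (hz : z ∈ degLE 𝒜 e) (hlead : intProj 𝒜 e z ∈ Ideal.span (x '' t)) :
    ∃ w ∈ Ideal.span (y '' t), z - w ∈ degLE 𝒜 (e - 1) := by
  obtain ⟨u, hu⟩ := Ideal.mem_span_image_finset_iff.mp hlead
  set v : ι → R := fun j => intProj 𝒜 (e - k j) (u j)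
  have hv : ∀ j ∈ t, v j ∈ degLE 𝒜 (e - k j) := fun j _ => intGrade_le_degLE _ (intProj_mem _ _)
  refine ⟨∑ j ∈ t, v j * y j, Ideal.mem_span_image_finset_iff.mpr ⟨v, rfl⟩,
    sub_mem_degLE_sub_one hz (sum_mul_mem_degLE hx hxy hv) ?_⟩
  rw [intProj_sum_mul_of_sub_mem hx hxy hv, ← intProj_of_mem (intProj_mem e z), ← hu,
    intProj_sum_mul hx]
  simp only [v, intProj_of_mem (intProj_mem _ _)]

variable [LinearOrder ι]

theorem exists_coeffs_mem_degLE_sub_one (hx : ∀ i, x i ∈ 𝒜 (k i))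
    (hxy : ∀ i, y i - x i ∈ degLE 𝒜 (k i - 1)) {s : Finset ι} (hreg : IsRegularOn x s)
    {D : ℤ} {a : ι → R} (ha : ∀ j ∈ s, a j ∈ degLE 𝒜 (D - k j))
    (hw : ∑ j ∈ s, a j * y j ∈ degLE 𝒜 (D - 1)) :
    ∃ a' : ι → R, (∀ j ∈ s, a' j ∈ degLE 𝒜 (D - 1 - k j)) ∧
      ∑ j ∈ s, a' j * y j = ∑ j ∈ s, a j * y j := by
  have hsyz : ∑ j ∈ s, intProj 𝒜 (D - k j) (a j) * x j = 0 := by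
    rw [← intProj_sum_mul_of_sub_mem hx hxy ha]
    exact hw D (by omega)
  obtain ⟨B, hBdeg, hB⟩ :=
    exists_homogeneous_koszul_coeffs hx hreg (fun j => intProj_mem _ _) hsyz
  have hC : ∀ j l, B j l - B l j ∈ intGrade 𝒜 (D - k j - k l) := fun j l =>
    sub_mem (hBdeg j l) (sub_right_comm D (k l) (k j) ▸ hBdeg l j)
  have hC' : ∀ j, ∀ l ∈ s, B j l - B l j ∈ degLE 𝒜 (D - k j - k l) :=
    fun j l _ => intGrade_le_degLE _ (hC j l)
  refine ⟨fun j => a j - ∑ l ∈ s, (B j l - B l j) * y l, fun j hj => ?_, ?_⟩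
  · rw [sub_right_comm]
    refine sub_mem_degLE_sub_one (ha j hj) (sum_mul_mem_degLE hx hxy (hC' j)) ?_
    rw [intProj_sum_mul_of_sub_mem hx hxy (hC' j), hB j hj]
    simp only [intProj_of_mem (hC j _)]
  · simp only [sub_mul (a _)]
    rw [Finset.sum_sub_distrib, Finset.sum_sum_sub_swap_mul_mul_eq_zero, sub_zero]

theorem exists_coeffs_mem_degLE (hx : ∀ i, x i ∈ 𝒜 (k i))
    (hxy : ∀ i, y i - x i ∈ degLE 𝒜 (k i - 1)) {s : Finset ι} (hreg : IsRegularOn x s)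
    {E : ℤ} {w : R} (hw : w ∈ Ideal.span (y '' s)) (hwE : w ∈ degLE 𝒜 E) :
    ∃ a : ι → R, (∀ j ∈ s, a j ∈ degLE 𝒜 (E - k j)) ∧ ∑ j ∈ s, a j * y j = w := by
  obtain ⟨u, rfl⟩ := Ideal.mem_span_image_finset_iff.mp hw
  have hu : ∀ᶠ D in Filter.atTop, E ≤ D ∧ ∀ j ∈ s, u j ∈ degLE 𝒜 (D - k j) :=
    (Filter.eventually_ge_atTop E).and <| (Filter.eventually_all_finset s).2 fun j _ =>
      (Filter.tendsto_atTop_add_const_right _ (-(k j : ℤ)) Filter.tendsto_id).eventually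
        (eventually_mem_degLE (u j))
  obtain ⟨D, hED, huD⟩ := hu.exists
  clear hw hu
  induction D, hED using Int.leInduction generalizing u with
  | base => exact ⟨u, huD, rfl⟩
  | succ D hED ih =>
    obtain ⟨a, ha, hsum⟩ := exists_coeffs_mem_degLE_sub_one hx hxy hreg huD
      (by simpa using degLE_mono hED hwE)
    rw [← hsum]
    exact ih a (hsum ▸ hwE) (by simpa using ha)

theorem intProj_mem_span_of_mul_mem_span (hx : ∀ i, x i ∈ 𝒜 (k i))
    (hxy : ∀ i, y i - x i ∈ degLE 𝒜 (k i - 1)) {t : Finset ι} (hreg : IsRegularOn x t) {i : ι}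
    (hxi : ∀ c, x i * c ∈ Ideal.span (x '' t) → c ∈ Ideal.span (x '' t)) {e : ℤ} {z : R}
    (hz : z ∈ degLE 𝒜 e) (hyz : y i * z ∈ Ideal.span (y '' t)) :
    intProj 𝒜 e z ∈ Ideal.span (x '' t) := by
  have hz' : z ∈ degLE 𝒜 (e + k i - k i) := by simpa using hz
  obtain ⟨a, ha, hsum⟩ := exists_coeffs_mem_degLE hx hxy hreg hyz
    (mul_comm z (y i) ▸ mul_mem_degLE hz (mem_degLE_of_sub_mem (hx i) (hxy i)))
  refine hxi _ ?_
  have hlead := congrArg (intProj 𝒜 (e + k i)) hsum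
  rw [intProj_sum_mul_of_sub_mem hx hxy ha, mul_comm,
    intProj_mul_of_sub_mem (hx i) (hxy i) hz', add_sub_cancel_right] at hlead
  rw [← hlead]
  exact Ideal.mem_span_image_finset_iff.mpr ⟨_, rfl⟩

theorem mem_span_of_mul_mem_span (hx : ∀ i, x i ∈ 𝒜 (k i))
    (hxy : ∀ i, y i - x i ∈ degLE 𝒜 (k i - 1)) {t : Finset ι} (hreg : IsRegularOn x t) {i : ι}
    (hxi : ∀ c, x i * c ∈ Ideal.span (x '' t) → c ∈ Ideal.span (x '' t)) {z : R}
    (hyz : y i * z ∈ Ideal.span (y '' t)) : z ∈ Ideal.span (y '' t) := by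
  obtain ⟨e, hz, he⟩ :=
    ((eventually_mem_degLE (𝒜 := 𝒜) z).and (Filter.eventually_ge_atTop (-1))).exists
  induction e, he using Int.leInduction generalizing z with
  | base => rw [eq_zero_of_mem_degLE (by norm_num) hz]; exact zero_mem _
  | succ e he ih =>
    obtain ⟨w, hw, hzw⟩ := exists_sub_mem_degLE_sub_one hx hxy hz
      (intProj_mem_span_of_mul_mem_span hx hxy hreg hxi hz hyz)
    have hzw' : z - w ∈ Ideal.span (y '' t) :=
      ih (by rw [mul_sub]; exact sub_mem hyz (Ideal.mul_mem_left _ _ hw)) (by simpa using hzw)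
    simpa using add_mem hzw' hw

end GradedRing

open GradedRing in
theorem IsRegularOn.of_sub_mem_degLE {R ι : Type*} [CommRing R] {𝒜 : ℕ → AddSubgroup R}
    [GradedRing 𝒜] [LinearOrder ι] {x y : ι → R} {k : ι → ℕ} (hx : ∀ i, x i ∈ 𝒜 (k i))
    (hxy : ∀ i, y i - x i ∈ degLE 𝒜 (k i - 1)) {s : Finset ι} (hreg : IsRegularOn x s) :
    IsRegularOn y s :=
  fun i hi _ => mem_span_of_mul_mem_span hx hxy (hreg.filter_lt i) (hreg i hi)

theorem List.Perm.exists_perm_and_eq_map {α β : Type*} {f : α → β} {l : List β} {L : List α}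
    (h : l.Perm (L.map f)) : ∃ L' : List α, L'.Perm L ∧ l = L'.map f := by
  generalize hl : L.map f = l' at h
  induction h generalizing L with
  | nil => exact ⟨[], by simp_all⟩
  | cons b _ ih =>
    obtain ⟨a, L, rfl, rfl, hL⟩ := List.map_eq_cons_iff.mp hl
    obtain ⟨L', hL', rfl⟩ := ih hL
    exact ⟨a :: L', hL'.cons a, rfl⟩
  | swap b c l =>
    obtain ⟨a, _, rfl, rfl, hL⟩ := List.map_eq_cons_iff.mp hl
    obtain ⟨a', L, rfl, rfl, rfl⟩ := List.map_eq_cons_iff.mp hL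
    exact ⟨a' :: a :: L, .swap _ _ _, rfl⟩
  | trans _ _ ih₁ ih₂ =>
    obtain ⟨L₂, hL₂, rfl⟩ := ih₂ hl
    obtain ⟨L₁, hL₁, rfl⟩ := ih₁ rfl
    exact ⟨L₁, hL₁.trans hL₂, rfl⟩

theorem isRegularSeq_ofFn_iff {R : Type*} [CommRing R] {n : ℕ} (f : Fin n → R) :
    IsRegularSeq (List.ofFn f) ↔ IsRegularOn f Finset.univ := by
  have hspan (i : Fin n) :
      {r | r ∈ (List.ofFn f).take i} = f '' ↑({j ∈ Finset.univ | j < i} : Finset (Fin n)) := by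
    ext r
    simp only [Set.mem_ofPred_eq, List.mem_take_iff_getElem, List.getElem_ofFn,
      List.length_ofFn, Finset.coe_filter, Finset.mem_univ, true_and, Set.mem_image]
    constructor
    · rintro ⟨j, hj, rfl⟩
      exact ⟨_, lt_min_iff.mp hj |>.1, rfl⟩
    · rintro ⟨j, hj, rfl⟩
      exact ⟨j, lt_min hj j.2, rfl⟩
  simp only [IsRegularSeq, IsRegularOn, List.length_ofFn, List.get_ofFn, Finset.mem_univ,
    true_implies]
  constructor
  · intro H i c
    rw [← hspan]
    exact H i i.2 c
  · intro H i hi c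
    rw [hspan ⟨i, hi⟩]
    exact H ⟨i, hi⟩ c

theorem stmt_6 {R : Type*} [CommRing R] (𝒜 : ℕ → AddSubgroup R) [GradedRing 𝒜]
    (n : ℕ) (x y : Fin n → R) (k : Fin n → ℕ)
    (hx : ∀ i, x i ∈ 𝒜 (k i))
    (hxy : ∀ i, Fmem 𝒜 ((k i : ℤ) - 1) (y i - x i))
    (hreg : ∀ l : List R, l.Perm (List.ofFn x) → IsRegularSeq l) :
    ∀ l : List R, l.Perm (List.ofFn y) → IsRegularSeq l := by
  intro l hl
  obtain ⟨L, hL, rfl⟩ := (List.ofFn_eq_map ▸ hl).exists_perm_and_eq_map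
  have hxL : IsRegularSeq (L.map x) := hreg _ (List.ofFn_eq_map ▸ hL.map x)
  rw [← List.ofFn_get L, List.map_ofFn, isRegularSeq_ofFn_iff] at hxL ⊢
  exact hxL.of_sub_mem_degLE (fun _ => hx _) (fun _ => GradedRing.mem_degLE_iff_fmem.mpr (hxy _))
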